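/- Let γ^a and β^a (a=1,...,n) be two sets of elements of Cl(p,q), n = p+q even, each satisfying the Clifford anticommutation relations, with both {γ^A} and {β^A} bases. Define H(U) = (1/2^n) ∑_A β^A U (γ^A)^{-1} and P(V) = (1/2^n) ∑_A γ^A V (β^A)^{-1}. Then P(V)H(U) = H(U)P(V) = Tr(V·H(U))·e for all U, V ∈ Cl(p,q). -/

import Mathlib

/-- Ordered product `e^{a_1} ⋯ e^{a_k}` (`a_1 < ⋯ < a_k`) of generators over an
ordered multi-index, encoded as a finset of indices. For `s = ∅` this is `1 = e`. -/
def cliffProd {n : ℕ} {A : Type*} [Ring A] (e : Fin n → A) (s : Finset (Fin n)) : A :=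
  ((s.sort (· ≤ ·)).map e).prod

/-- The entries of the diagonal matrix `η = diag(1,…,1,−1,…,−1)` with `p` entries `+1`
followed by `q = n - p` entries `−1`. -/
def eta (p : ℕ) {n : ℕ} (a b : Fin n) : ℤ :=
  if a = b then (if (a : ℕ) < p then 1 else -1) else 0

/-- The generalized Reynolds operator `H(U) = 2⁻ⁿ ∑_A β^A U (γ^A)⁻¹`. -/
noncomputable def genH (F : Type*) [RCLike F] {n : ℕ} {A : Type*} [Ring A] [Algebra F A]
    (β γ : Fin n → A) (U : A) : A :=
  ((2 : F) ^ n)⁻¹ • ∑ s : Finset (Fin n), cliffProd β s * U * Ring.inverse (cliffProd γ s)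

/-!
For a Clifford family `δ`, write `δ^A` for the ordered products. Then `δ^a δ^A = ± δ^(A ∆ {a})`
with a sign that depends only on `a`, `A` and the signature, not on the family. Reindexing the
average by `A ↦ A ∆ {a}` therefore gives `β^a H(U) = H(U) γ^a`, hence `β^A H(U) = H(U) γ^A`, and
so `P(V) H(U) = 2⁻ⁿ ∑_A γ^A (V H(U)) (γ^A)⁻¹`. For even `n` every `δ^A ≠ 1` anticommutes with
some generator, so only scalars commute with all `γ^a` and this average is a scalar. Its value is
the scalar part of `V H(U)`, because the scalar part is `2⁻ⁿ` times the trace of left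
multiplication, which conjugation preserves. The same holds for `H(U) P(V)`, and when `x y = c`
and `y x = d` are both scalars, `c y = y x y = d y` forces `c = d` unless `y = 0`.
-/

open Finset
open scoped symmDiff Ring

def IsCliffordFamily (p : ℕ) {n : ℕ} {A : Type*} [Ring A] (δ : Fin n → A) : Prop :=
  ∀ a b : Fin n, δ a * δ b + δ b * δ a = ((2 * eta p a b : ℤ) : A)

lemma isUnit_eta_self (p : ℕ) {n : ℕ} (a : Fin n) : IsUnit (eta p a a) := by
  rw [Int.isUnit_iff]
  by_cases h : (a : ℕ) < p <;> simp [eta, h]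

lemma exists_odd_card_erase {n : ℕ} (hn : Even n) {t : Finset (Fin n)} (ht : t ≠ ∅) :
    ∃ a, Odd #(t.erase a) := by
  rcases Nat.even_or_odd #t with he | ho
  · obtain ⟨a, ha⟩ := nonempty_iff_ne_empty.mpr ht
    refine ⟨a, ?_⟩
    rw [card_erase_of_mem ha]
    exact Nat.Even.sub_odd (card_pos.mpr ⟨a, ha⟩) he odd_one
  · obtain ⟨a, ha⟩ : ∃ a, a ∉ t := by
      by_contra! h
      rw [eq_univ_iff_forall.mpr h, card_univ, Fintype.card_fin] at ho
      exact Nat.not_odd_iff_even.mpr hn ho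
    exact ⟨a, by rwa [erase_eq_of_notMem ha]⟩

section CliffordFamily

variable {n p : ℕ} {A : Type*} [Ring A] {δ : Fin n → A}

lemma cliffProd_empty (δ : Fin n → A) : cliffProd δ ∅ = 1 := by
  simp [cliffProd]

lemma cliffProd_insert_of_lt (δ : Fin n → A) {a : Fin n} {s : Finset (Fin n)}
    (h : ∀ b ∈ s, a < b) : cliffProd δ (insert a s) = δ a * cliffProd δ s := by
  have ha : a ∉ s := fun h' => lt_irrefl a (h a h')
  simp [cliffProd, Finset.sort_insert (· ≤ ·) (fun b hb => (h b hb).le) ha]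

lemma IsCliffordFamily.mul_eq_neg_mul (hδ : IsCliffordFamily p δ) {a b : Fin n} (hab : a ≠ b) :
    δ a * δ b = -(δ b * δ a) := by
  have h := hδ a b
  simp only [eta, if_neg hab, mul_zero, Int.cast_zero] at h
  exact eq_neg_of_add_eq_zero_left h

lemma IsCliffordFamily.mul_self [IsAddTorsionFree A] (hδ : IsCliffordFamily p δ) (a : Fin n) :
    δ a * δ a = eta p a a := by
  have h := hδ a a
  rw [← two_nsmul, Int.cast_mul, Int.cast_two, two_mul, ← two_nsmul] at h
  exact IsAddTorsionFree.nsmul_right_injective two_ne_zero h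

lemma IsCliffordFamily.isUnit [IsAddTorsionFree A] (hδ : IsCliffordFamily p δ) (a : Fin n) :
    IsUnit (δ a) := by
  have h : IsUnit (δ a * δ a) := hδ.mul_self a ▸ (isUnit_eta_self p a).map (Int.castRingHom A)
  exact ((Commute.refl _).isUnit_mul_iff.mp h).1

lemma IsCliffordFamily.isUnit_cliffProd [IsAddTorsionFree A] (hδ : IsCliffordFamily p δ)
    (s : Finset (Fin n)) : IsUnit (cliffProd δ s) := by
  induction s using Finset.induction_on_min with
  | empty => simp [cliffProd_empty]
  | insert a s ha ih => rw [cliffProd_insert_of_lt δ ha]; exact (hδ.isUnit a).mul ih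

lemma IsCliffordFamily.mul_cliffProd (hδ : IsCliffordFamily p δ) (a : Fin n) (s : Finset (Fin n)) :
    δ a * cliffProd δ s = (-1 : ℤ) ^ #(s.erase a) • (cliffProd δ s * δ a) := by
  induction s using Finset.induction_on_min with
  | empty => simp [cliffProd_empty]
  | insert m t hmt ih =>
    have hm : m ∉ t := fun h => lt_irrefl _ (hmt m h)
    rw [cliffProd_insert_of_lt δ hmt]
    rcases eq_or_ne a m with rfl | hne
    · rw [erase_eq_of_notMem hm] at ih
      conv_lhs => rw [ih]
      rw [erase_insert hm, mul_smul_comm, mul_assoc]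
    · rw [erase_insert_of_ne hne.symm, card_insert_of_notMem (fun h => hm (mem_of_mem_erase h)),
        ← mul_assoc, hδ.mul_eq_neg_mul hne, neg_mul, mul_assoc, ih, mul_smul_comm, pow_succ,
        mul_neg_one, neg_smul, mul_assoc]

lemma IsCliffordFamily.conj_cliffProd [IsAddTorsionFree A] (hδ : IsCliffordFamily p δ) (a : Fin n)
    (s : Finset (Fin n)) :
    δ a * cliffProd δ s * (δ a)⁻¹ʳ = (-1 : ℤ) ^ #(s.erase a) • cliffProd δ s := by
  rw [hδ.mul_cliffProd, smul_mul_assoc, Ring.mul_inverse_cancel_right _ _ (hδ.isUnit a)]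

end CliffordFamily

section UniversalSign

variable {n : ℕ} {A : Type*} [Ring A] [IsAddTorsionFree A]

lemma exists_mul_cliffProd_eq_smul (p : ℕ) (a : Fin n) (s : Finset (Fin n)) :
    ∃ z : ℤˣ, ∀ δ : Fin n → A, IsCliffordFamily p δ →
      δ a * cliffProd δ s = z • cliffProd δ (s ∆ {a}) := by
  induction s using Finset.induction_on_min with
  | empty => exact ⟨1, fun δ _ => by rw [← bot_eq_empty, bot_symmDiff]; simp [cliffProd]⟩
  | insert m t hmt ih =>
    have hm : m ∉ t := fun h => lt_irrefl _ (hmt m h)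
    rcases lt_trichotomy a m with ham | rfl | hma
    · have hlt : ∀ b ∈ insert m t, a < b := by
        simp only [mem_insert, forall_eq_or_imp]
        exact ⟨ham, fun b hb => ham.trans (hmt b hb)⟩
      have hsd : insert m t ∆ {a} = insert a (insert m t) := by
        ext x; simp only [mem_symmDiff, mem_insert, mem_singleton]; grind
      exact ⟨1, fun δ _ => by rw [hsd, cliffProd_insert_of_lt δ hlt, one_smul]⟩
    · have hsd : insert a t ∆ {a} = t := by
        ext x; simp only [mem_symmDiff, mem_insert, mem_singleton]; grind
      refine ⟨(isUnit_eta_self p a).unit, fun δ hδ => ?_⟩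
      rw [hsd, cliffProd_insert_of_lt δ hmt, ← mul_assoc, hδ.mul_self, Units.smul_def,
        IsUnit.unit_spec, ← zsmul_one, smul_mul_assoc, one_mul]
    · obtain ⟨z, hz⟩ := ih
      have hsd : insert m t ∆ {a} = insert m (t ∆ {a}) := by
        ext x; simp only [mem_symmDiff, mem_insert, mem_singleton]; grind
      have hlt : ∀ b ∈ t ∆ {a}, m < b := by
        simp only [mem_symmDiff, mem_singleton]; grind
      refine ⟨-z, fun δ hδ => ?_⟩
      rw [hsd, cliffProd_insert_of_lt δ hmt, cliffProd_insert_of_lt δ hlt, ← mul_assoc,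
        hδ.mul_eq_neg_mul hma.ne', neg_mul, mul_assoc, hz δ hδ, mul_smul_comm, Units.neg_smul]

end UniversalSign

lemma trace_lmul_mul_mul_inverse {K A : Type*} [CommRing K] [Ring A] [Algebra K A] {u : A}
    (hu : IsUnit u) (x : A) :
    LinearMap.trace K A (Algebra.lmul K A (u * x * u⁻¹ʳ)) =
      LinearMap.trace K A (Algebra.lmul K A x) := by
  rw [mul_assoc, map_mul, LinearMap.trace_mul_comm, ← map_mul, mul_assoc,
    Ring.inverse_mul_cancel _ hu, mul_one]

section CliffordBasis

variable {n p : ℕ} {K A : Type*} [Field K] [CharZero K] [Ring A] [Algebra K A]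
  [IsAddTorsionFree A] {δ : Fin n → A}

lemma IsCliffordFamily.trace_lmul_cliffProd (hn : Even n) (hδ : IsCliffordFamily p δ)
    (b : Module.Basis (Finset (Fin n)) K A) (s : Finset (Fin n)) :
    LinearMap.trace K A (Algebra.lmul K A (cliffProd δ s)) = if s = ∅ then 2 ^ n else 0 := by
  have := Module.Free.of_basis b
  have := Module.Finite.of_basis b
  split_ifs with hs
  · rw [hs, cliffProd_empty, map_one, LinearMap.trace_one, Module.finrank_eq_card_basis b,
      Fintype.card_finset, Fintype.card_fin]
    push_cast; rfl
  · obtain ⟨a, ha⟩ := exists_odd_card_erase hn hs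
    have h := trace_lmul_mul_mul_inverse (K := K) (hδ.isUnit a) (cliffProd δ s)
    rw [hδ.conj_cliffProd, ha.neg_one_pow, neg_one_zsmul, map_neg, map_neg] at h
    exact neg_eq_self.mp h

lemma IsCliffordFamily.trace_lmul (hn : Even n) (hδ : IsCliffordFamily p δ)
    (b : Module.Basis (Finset (Fin n)) K A) (hb : ∀ s, b s = cliffProd δ s) (X : A) :
    LinearMap.trace K A (Algebra.lmul K A X) = 2 ^ n * b.repr X ∅ := by
  conv_lhs => rw [← b.sum_repr X]
  simp only [map_sum, map_smul, hb, hδ.trace_lmul_cliffProd hn b, smul_eq_mul, mul_ite, mul_zero,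
    Fintype.sum_ite_eq']
  exact mul_comm _ _

lemma IsCliffordFamily.exists_eq_smul_one_of_forall_commute (hn : Even n)
    (hδ : IsCliffordFamily p δ) (b : Module.Basis (Finset (Fin n)) K A)
    (hb : ∀ s, b s = cliffProd δ s) {X : A} (hX : ∀ a, Commute (δ a) X) : ∃ c : K, X = c • 1 := by
  have hcoeff : ∀ t, t ≠ ∅ → b.repr X t = 0 := by
    intro t ht
    obtain ⟨a, ha⟩ := exists_odd_card_erase hn ht
    have hconj : X = ∑ u, (b.repr X u * (-1 : K) ^ #(u.erase a)) • b u := by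
      calc X = δ a * X * (δ a)⁻¹ʳ := by
            rw [(hX a).eq, Ring.mul_inverse_cancel_right _ _ (hδ.isUnit a)]
        _ = _ := by
          conv_lhs => rw [← b.sum_repr X]
          simp only [mul_sum, sum_mul, mul_smul_comm, smul_mul_assoc, hb, hδ.conj_cliffProd,
            ← Int.cast_smul_eq_zsmul K, smul_smul, Int.cast_pow, Int.cast_neg, Int.cast_one]
    have h : b.repr X t = b.repr X t * (-1) ^ #(t.erase a) := by
      conv_lhs => rw [hconj, b.repr_sum_self]
    rw [ha.neg_one_pow, mul_neg_one] at h
    exact self_eq_neg.mp h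
  refine ⟨b.repr X ∅, ?_⟩
  conv_lhs => rw [← b.sum_repr X]
  rw [Fintype.sum_eq_single ∅ (fun t ht => by rw [hcoeff t ht, zero_smul]), hb, cliffProd_empty]

end CliffordBasis

lemma mul_comm_of_mul_eq_smul_one {K A : Type*} [Field K] [Ring A] [Algebra K A] {x y : A}
    {c d : K} (hxy : x * y = c • 1) (hyx : y * x = d • 1) : x * y = y * x := by
  rcases eq_or_ne y 0 with rfl | hy
  · rw [mul_zero, zero_mul]
  have hcd : c • y = d • y := by
    calc c • y = y * (x * y) := by rw [hxy, mul_smul_comm, mul_one]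
      _ = (y * x) * y := (mul_assoc _ _ _).symm
      _ = d • y := by rw [hyx, smul_mul_assoc, one_mul]
  rw [hxy, hyx, smul_left_injective K hy hcd]

section GeneralizedReynolds

variable {n p : ℕ} {F A : Type*} [RCLike F] [Ring A] [Algebra F A] [IsAddTorsionFree A]
  {β γ δ : Fin n → A}

lemma mul_genH (hβ : IsCliffordFamily p β) (hγ : IsCliffordFamily p γ) (a : Fin n) (U : A) :
    β a * genH F β γ U = genH F β γ U * γ a := by
  choose z hz using exists_mul_cliffProd_eq_smul (A := A) p a
  have hinv : ∀ s, (cliffProd γ s)⁻¹ʳ = z s • ((cliffProd γ (s ∆ {a}))⁻¹ʳ * γ a) := by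
    intro s
    have h : z s • ((cliffProd γ (s ∆ {a}))⁻¹ʳ * γ a) * cliffProd γ s = 1 := by
      rw [smul_mul_assoc, mul_assoc, hz s γ hγ, mul_smul_comm, smul_smul, Int.units_mul_self,
        one_smul, Ring.inverse_mul_cancel _ (hγ.isUnit_cliffProd _)]
    rw [← one_mul (cliffProd γ s)⁻¹ʳ, ← h,
      Ring.mul_inverse_cancel_right _ _ (hγ.isUnit_cliffProd s)]
  have hterm : ∀ s, β a * (cliffProd β s * U * (cliffProd γ s)⁻¹ʳ)
      = cliffProd β (s ∆ {a}) * U * (cliffProd γ (s ∆ {a}))⁻¹ʳ * γ a := by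
    intro s
    rw [← mul_assoc, ← mul_assoc, hz s β hβ, hinv s]
    simp only [smul_mul_assoc, mul_smul_comm, smul_smul, Int.units_mul_self, one_smul, mul_assoc]
  simp only [genH, mul_smul_comm, smul_mul_assoc, mul_sum, sum_mul, hterm]
  congr 1
  exact Equiv.sum_comp (Function.Involutive.toPerm (fun s : Finset (Fin n) => s ∆ {a})
    fun s => symmDiff_symmDiff_cancel_right {a} s)
    fun s => cliffProd β s * U * (cliffProd γ s)⁻¹ʳ * γ a

lemma cliffProd_mul_genH (hβ : IsCliffordFamily p β) (hγ : IsCliffordFamily p γ)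
    (s : Finset (Fin n)) (U : A) :
    cliffProd β s * genH F β γ U = genH F β γ U * cliffProd γ s := by
  induction s using Finset.induction_on_min with
  | empty => rw [cliffProd_empty, cliffProd_empty, one_mul, mul_one]
  | insert m t hmt ih =>
    rw [cliffProd_insert_of_lt β hmt, cliffProd_insert_of_lt γ hmt, mul_assoc, ih, ← mul_assoc,
      mul_genH hβ hγ, mul_assoc]

lemma genH_mul_genH (hβ : IsCliffordFamily p β) (hγ : IsCliffordFamily p γ) (U V : A) :
    genH F γ β V * genH F β γ U = genH F γ γ (V * genH F β γ U) := by
  set H := genH F β γ U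
  have hinv : ∀ s, (cliffProd β s)⁻¹ʳ * H = H * (cliffProd γ s)⁻¹ʳ := fun s => by
    rw [Ring.inverse_mul_eq_iff_eq_mul _ _ _ (hβ.isUnit_cliffProd s), ← mul_assoc,
      cliffProd_mul_genH hβ hγ, Ring.mul_inverse_cancel_right _ _ (hγ.isUnit_cliffProd s)]
  simp only [genH, smul_mul_assoc, sum_mul, mul_assoc, hinv]

lemma IsCliffordFamily.trace_lmul_genH_self (hδ : IsCliffordFamily p δ) (W : A) :
    LinearMap.trace F A (Algebra.lmul F A (genH F δ δ W)) =
      LinearMap.trace F A (Algebra.lmul F A W) := by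
  simp only [genH, map_smul, map_sum, trace_lmul_mul_mul_inverse (hδ.isUnit_cliffProd _),
    sum_const, card_univ, Fintype.card_finset, Fintype.card_fin, nsmul_eq_mul, smul_eq_mul,
    Nat.cast_pow, Nat.cast_ofNat]
  field_simp

lemma IsCliffordFamily.genH_self_eq_smul_one {e : Fin n → A} (hn : Even n)
    (hδ : IsCliffordFamily p δ) (bΔ : Module.Basis (Finset (Fin n)) F A)
    (hbΔ : ∀ s, bΔ s = cliffProd δ s) (he : IsCliffordFamily p e)
    (bE : Module.Basis (Finset (Fin n)) F A) (hbE : ∀ s, bE s = cliffProd e s) (W : A) :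
    genH F δ δ W = bE.repr W ∅ • 1 := by
  obtain ⟨c, hc⟩ :=
    hδ.exists_eq_smul_one_of_forall_commute hn bΔ hbΔ fun a => mul_genH (F := F) hδ hδ a W
  have htr := hδ.trace_lmul_genH_self (F := F) W
  rw [he.trace_lmul hn bE hbE, he.trace_lmul hn bE hbE, hc, ← cliffProd_empty e, ← hbE,
    map_smul, bE.repr_self, Finsupp.smul_single, smul_eq_mul, mul_one,
    Finsupp.single_eq_same] at htr
  rw [hc, mul_left_cancel₀ (pow_ne_zero n two_ne_zero) htr]

end GeneralizedReynolds

theorem stmt13_general {F : Type*} [RCLike F] (p n : ℕ) (hne : Even n)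
    {A : Type*} [Ring A] [Algebra F A]
    (e : Fin n → A)
    (hrele : ∀ a b : Fin n, e a * e b + e b * e a = ((2 * eta p a b : ℤ) : A))
    (bE : Module.Basis (Finset (Fin n)) F A)
    (hbE : ∀ s, bE s = cliffProd e s)
    (γ β : Fin n → A)
    (hγ : ∀ a b : Fin n, γ a * γ b + γ b * γ a = ((2 * eta p a b : ℤ) : A))
    (hβ : ∀ a b : Fin n, β a * β b + β b * β a = ((2 * eta p a b : ℤ) : A))
    (bΓ : Module.Basis (Finset (Fin n)) F A) (hbΓ : ∀ s, bΓ s = cliffProd γ s)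
    (bB : Module.Basis (Finset (Fin n)) F A) (hbB : ∀ s, bB s = cliffProd β s)
    (U V : A) :
    genH F γ β V * genH F β γ U = genH F β γ U * genH F γ β V ∧
    genH F γ β V * genH F β γ U = (bE.repr (V * genH F β γ U) ∅) • (1 : A) := by
  have := IsAddTorsionFree.of_isTorsionFree F A
  have hPH : genH F γ β V * genH F β γ U = bE.repr (V * genH F β γ U) ∅ • 1 := by
    rw [genH_mul_genH hβ hγ, IsCliffordFamily.genH_self_eq_smul_one hne hγ bΓ hbΓ hrele bE hbE]
  have hHP : genH F β γ U * genH F γ β V = bE.repr (U * genH F γ β V) ∅ • 1 := by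
    rw [genH_mul_genH hγ hβ, IsCliffordFamily.genH_self_eq_smul_one hne hβ bB hbB hrele bE hbE]
  exact ⟨mul_comm_of_mul_eq_smul_one hPH hHP, hPH⟩

/-- Let `γ^a`, `β^a` satisfy the Clifford relations in `Cl(p,q)` with `n = p + q` even, and
suppose both `{γ^A}` and `{β^A}` are bases. With `H(U) = 2⁻ⁿ ∑_A β^A U (γ^A)⁻¹` and
`P(V) = 2⁻ⁿ ∑_A γ^A V (β^A)⁻¹`, we have `P(V)H(U) = H(U)P(V) = Tr(V·H(U))·e` for all `U, V`,
where `Tr` is the scalar coefficient in the standard basis `{e^A}`. -/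
theorem stmt13 {F : Type*} [RCLike F] (p q n : ℕ) (hn : n = p + q) (hne : Even n)
    {A : Type*} [Ring A] [Algebra F A]
    (e : Fin n → A)
    (hrele : ∀ a b : Fin n, e a * e b + e b * e a = ((2 * eta p a b : ℤ) : A))
    (bE : Module.Basis (Finset (Fin n)) F A)
    (hbE : ∀ s, bE s = cliffProd e s)
    (γ β : Fin n → A)
    (hγ : ∀ a b : Fin n, γ a * γ b + γ b * γ a = ((2 * eta p a b : ℤ) : A))
    (hβ : ∀ a b : Fin n, β a * β b + β b * β a = ((2 * eta p a b : ℤ) : A))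
    (bΓ : Module.Basis (Finset (Fin n)) F A) (hbΓ : ∀ s, bΓ s = cliffProd γ s)
    (bB : Module.Basis (Finset (Fin n)) F A) (hbB : ∀ s, bB s = cliffProd β s)
    (U V : A) :
    genH F γ β V * genH F β γ U = genH F β γ U * genH F γ β V ∧
    genH F γ β V * genH F β γ U = (bE.repr (V * genH F β γ U) ∅) • (1 : A) :=
  stmt13_general p n hne e hrele bE hbE γ β hγ hβ bΓ hbΓ bB hbB U V
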